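/- For every natural number n, ω + n is an ordinal number with first number ω, where ω + 0 = ω ∪ {p,q} and ω + (n+1) = (ω + n) ∪ {ω + n}. -/

import Mathlib

/-- Extensional equality of objects: `s = t` iff they have the same members. -/
def eqE {Obj : Type} (mem : Obj → Obj → Prop) (s t : Obj) : Prop :=
  ∀ u, mem u s ↔ mem u t

/-- Inclusion: `a ⊆ b`. -/
def subE {Obj : Type} (mem : Obj → Obj → Prop) (a b : Obj) : Prop :=
  ∀ u, mem u a → mem u b

/-- `w` is the union `⋃ s`. -/
def isUnionOf {Obj : Type} (mem : Obj → Obj → Prop) (w s : Obj) : Prop :=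
  ∀ u, mem u w ↔ ∃ z, mem z s ∧ mem u z

/-- `t` is the successor `s ∪ {s}` of `s` (membership expressed directly). -/
def isSuccOf {Obj : Type} (mem : Obj → Obj → Prop) (t s : Obj) : Prop :=
  ∀ u, mem u t ↔ (mem u s ∨ eqE mem u s)

/-- `S` is an ordinal number with first number `α`:  `S ∉ α` and every
`X ∈ S ∪ {S}` satisfies `X ∈ α ∪ {α}` or (`α ∈ X` and `X = ⋃X ∪ {⋃X}`). -/
def isNat {Obj : Type} (mem : Obj → Obj → Prop) (α S : Obj) : Prop :=
  ¬ mem S α ∧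
  ∀ X, (mem X S ∨ eqE mem X S) →
    (mem X α ∨ eqE mem X α) ∨
    (mem α X ∧ ∃ U, isUnionOf mem U X ∧ isSuccOf mem X U)

/-!
Individuals are the objects `x` with `x ∈ x`. As `α = {p, q}` is a set of individuals, `ω` is
a transitive set with `ω ∉ ω`. For such a first number `β`, `isNat β` holds of every set equal
to `β` and is preserved by successors, so the theorem follows by `∈`-induction (regularity) over
the non-individual elements `m ∈ ω`: each one with `isNat α m` equals `α` or is the successor
of a smaller one. If `p = q`, then `α` is an individual and no `n` satisfies `isNat α n`.
-/

section

variable {Obj : Type} (mem : Obj → Obj → Prop)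

def SubstAxiom : Prop :=
  ∀ s t v, eqE mem s t → mem t v → mem s v

def IndividualAxiom : Prop :=
  ∀ p s, mem s p → mem p p → eqE mem s p

def PairingAxiom : Prop :=
  ∀ s t, ∃ v, ∀ u, mem u v ↔ (eqE mem u s ∨ eqE mem u t)

def UnionAxiom : Prop :=
  ∀ s, ∃ v, isUnionOf mem v s

def RegularityAxiom : Prop :=
  ∀ s, (∃ v, mem v s ∧ ¬ mem v v) →
    ∃ v, mem v s ∧ ¬ mem v v ∧ ∀ u, mem u s → ¬ mem u u → ¬ mem u v

def SeparationAxiom : Prop :=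
  ∀ (Φ : Obj → Prop) (s : Obj), (∃ u, mem u s ∧ Φ u) →
    ∃ v, ∀ u, mem u v ↔ (mem u s ∧ Φ u)

def IsTransitive (x : Obj) : Prop :=
  ∀ y, mem y x → ∀ z, mem z y → mem z x

def IsNatElem (α X : Obj) : Prop :=
  (mem X α ∨ eqE mem X α) ∨ (mem α X ∧ ∃ U, isUnionOf mem U X ∧ isSuccOf mem X U)

variable {mem}

theorem eqE.refl (s : Obj) : eqE mem s s := fun _ => Iff.rfl

theorem eqE.symm {s t : Obj} (h : eqE mem s t) : eqE mem t s := fun u => (h u).symm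

theorem eqE.trans {s t r : Obj} (h₁ : eqE mem s t) (h₂ : eqE mem t r) : eqE mem s r :=
  fun u => (h₁ u).trans (h₂ u)

theorem mem_self_of_eqE (subst : SubstAxiom mem) {x a : Obj} (h : eqE mem x a)
    (ha : mem a a) : mem x x :=
  (h x).2 (subst x a a h ha)

theorem mem_iff_eqE_of_mem_self (subst : SubstAxiom mem) (indiv : IndividualAxiom mem)
    {x u : Obj} (hx : mem x x) : mem u x ↔ eqE mem u x :=
  ⟨fun h => indiv x u h hx, fun h => subst u x x h hx⟩

theorem mem_self_of_mem_of_mem_self (subst : SubstAxiom mem) (indiv : IndividualAxiom mem)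
    {a x : Obj} (ha : mem a x) (hx : mem x x) : mem a a :=
  mem_self_of_eqE subst (indiv x a ha hx) hx

theorem isTransitive_of_forall_mem_self (subst : SubstAxiom mem) (indiv : IndividualAxiom mem)
    {a : Obj} (h : ∀ u, mem u a → mem u u) : IsTransitive mem a :=
  fun y hy z hz => subst z y a (indiv y z hz (h y hy)) hy

theorem isSuccOf.self_mem {S B : Obj} (h : isSuccOf mem S B) : mem B S :=
  (h B).2 (Or.inr (eqE.refl B))

theorem isSuccOf.congr_left {S T B : Obj} (h : isSuccOf mem S B) (hT : eqE mem T S) :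
    isSuccOf mem T B :=
  fun u => (hT u).trans (h u)

theorem isSuccOf.congr_right {S B C : Obj} (h : isSuccOf mem S B) (hC : eqE mem B C) :
    isSuccOf mem S C :=
  fun u => (h u).trans (or_congr (hC u) ⟨fun h => h.trans hC, fun h => h.trans hC.symm⟩)

theorem isUnionOf.congr_right {U X Y : Obj} (h : isUnionOf mem U X) (hY : eqE mem X Y) :
    isUnionOf mem U Y :=
  fun u => (h u).trans (exists_congr fun z => and_congr_left fun _ => hY z)

theorem isSuccOf.mem_self_of_mem_self (subst : SubstAxiom mem) (indiv : IndividualAxiom mem)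
    {S B : Obj} (h : isSuccOf mem S B) (hB : mem B B) : mem S S := by
  refine mem_self_of_eqE subst (fun u => ?_) hB
  rw [h u, mem_iff_eqE_of_mem_self subst indiv hB, or_self]

theorem isSuccOf.isTransitive {S U : Obj} (hS : isSuccOf mem S U) (hU : isUnionOf mem U S) :
    IsTransitive mem S :=
  fun y hy z hz => (hS z).2 (Or.inl ((hU z).2 ⟨y, hy, hz⟩))

theorem isSuccOf.isUnionOf {S B : Obj} (hS : isSuccOf mem S B) (hB : IsTransitive mem B) :
    isUnionOf mem B S := by
  refine fun u => ⟨fun hu => ⟨B, hS.self_mem, hu⟩, fun ⟨z, hz, hu⟩ => ?_⟩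
  rcases (hS z).1 hz with hzB | hzB
  · exact hB z hzB u hu
  · exact (hzB u).1 hu

theorem exists_isSuccOf (pairing : PairingAxiom mem) (union : UnionAxiom mem) (x : Obj) :
    ∃ S, isSuccOf mem S x := by
  obtain ⟨P, hP⟩ := pairing x x
  obtain ⟨Q, hQ⟩ := pairing x P
  obtain ⟨S, hS⟩ := union Q
  refine ⟨S, fun u => (hS u).trans ⟨?_, ?_⟩⟩
  · rintro ⟨z, hzQ, huz⟩
    rcases (hQ z).1 hzQ with hz | hz
    · exact Or.inl ((hz u).1 huz)
    · exact Or.inr (((hP u).1 ((hz u).1 huz)).elim id id)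
  · rintro (h | h)
    · exact ⟨x, (hQ x).2 (Or.inl (eqE.refl x)), h⟩
    · exact ⟨P, (hQ P).2 (Or.inr (eqE.refl P)), (hP u).2 (Or.inl h)⟩

theorem eqE_of_isSuccOf_of_isSuccOf {S A B : Obj} (hA : isSuccOf mem S A)
    (hB : isSuccOf mem S B) (h : ¬ (mem A B ∧ mem B A)) : eqE mem A B := by
  rcases (hB A).1 hA.self_mem with hAB | hAB
  · rcases (hA B).1 hB.self_mem with hBA | hBA
    · exact absurd ⟨hAB, hBA⟩ h
    · exact hBA.symm
  · exact hAB

theorem RegularityAxiom.induction (regularity : RegularityAxiom mem)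
    (separation : SeparationAxiom mem) {s : Obj} {Φ : Obj → Prop}
    (step : ∀ x, mem x s → ¬ mem x x →
      (∀ y, mem y s → ¬ mem y y → mem y x → Φ y) → Φ x) :
    ∀ x, mem x s → ¬ mem x x → Φ x := by
  by_contra! ⟨x, hxs, hxx, hΦx⟩
  obtain ⟨B, hB⟩ := separation (fun x => ¬ mem x x ∧ ¬ Φ x) s ⟨x, hxs, hxx, hΦx⟩
  obtain ⟨m, hmB, hmm, hmin⟩ := regularity B ⟨x, (hB x).2 ⟨hxs, hxx, hΦx⟩, hxx⟩
  obtain ⟨hms, -, hΦm⟩ := (hB m).1 hmB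
  refine hΦm (step m hms hmm fun y hys hyy hym => ?_)
  by_contra hΦy
  exact hmin y ((hB y).2 ⟨hys, hyy, hΦy⟩) hyy hym

theorem IsNatElem.congr (subst : SubstAxiom mem) {α X Y : Obj} (h : IsNatElem mem α X)
    (hXY : eqE mem X Y) : IsNatElem mem α Y := by
  rcases h with (hX | hX) | ⟨hαX, U, hU, hS⟩
  · exact Or.inl (Or.inl (subst Y X α hXY.symm hX))
  · exact Or.inl (Or.inr (hXY.symm.trans hX))
  · exact Or.inr ⟨(hXY α).1 hαX, U, hU.congr_right hXY, hS.congr_left hXY.symm⟩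

theorem isNat_of_eqE (subst : SubstAxiom mem) {α X : Obj} (hα : ¬ mem α α)
    (h : eqE mem X α) : isNat mem α X := by
  refine ⟨fun hXα => hα (subst α X α h.symm hXα), fun Y hY => Or.inl ?_⟩
  rcases hY with hY | hY
  · exact Or.inl ((h Y).1 hY)
  · exact Or.inr (hY.trans h)

theorem isNat_self (subst : SubstAxiom mem) {α : Obj} (hα : ¬ mem α α) : isNat mem α α :=
  isNat_of_eqE subst hα (eqE.refl α)

theorem isNat.not_mem_self (subst : SubstAxiom mem) (indiv : IndividualAxiom mem) {α X : Obj}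
    (hα : ¬ mem α α) (hX : isNat mem α X) : ¬ mem X X := by
  intro hXX
  rcases hX.2 X (Or.inr (eqE.refl X)) with (h | h) | ⟨hαX, -⟩
  · exact hX.1 h
  · exact hX.1 ((h X).1 hXX)
  · exact hα (mem_self_of_mem_of_mem_self subst indiv hαX hXX)

theorem isNat.isTransitive {α N : Obj} (hα : IsTransitive mem α) (hN : isNat mem α N) :
    IsTransitive mem N := by
  rcases hN.2 N (Or.inr (eqE.refl N)) with (h | h) | ⟨-, U, hU, hS⟩
  · exact absurd h hN.1
  · exact fun y hy z hz => (h z).2 (hα y ((h y).1 hy) z hz)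
  · exact hS.isTransitive hU

theorem isNat.of_mem (subst : SubstAxiom mem) {α N m : Obj} (hα : IsTransitive mem α)
    (hN : isNat mem α N) (hm : mem m N) (hmα : ¬ mem m α) : isNat mem α m := by
  refine ⟨hmα, fun X hX => ?_⟩
  rcases hX with hX | hX
  · exact hN.2 X (Or.inl (hN.isTransitive hα m hm X hX))
  · exact IsNatElem.congr subst (hN.2 m (Or.inl hm)) hX.symm

theorem isNat.succ {α B S : Obj} (hαt : IsTransitive mem α) (hα : ¬ mem α α)
    (hB : isNat mem α B) (hS : isSuccOf mem S B) : isNat mem α S := by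
  have hαS : mem α S := by
    rcases hB.2 B (Or.inr (eqE.refl B)) with (h | h) | ⟨hαB, -⟩
    · exact absurd h hB.1
    · exact (hS α).2 (Or.inr h.symm)
    · exact (hS α).2 (Or.inl hαB)
  refine ⟨fun hSα => hα (hαt S hSα α hαS), fun X hX => ?_⟩
  rcases hX with hX | hX
  · exact hB.2 X ((hS X).1 hX)
  · exact Or.inr ⟨(hX α).2 hαS, B, (hS.isUnionOf (hB.isTransitive hαt)).congr_right hX.symm,
      hS.congr_left hX⟩

theorem isNat_of_isSuccOf_of_isSuccOf (subst : SubstAxiom mem) {β A W S : Obj}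
    (hβt : IsTransitive mem β) (hβ : ¬ mem β β) (hWβ : eqE mem W β) (hA : isSuccOf mem S A)
    (hW : isSuccOf mem S W) : isNat mem β A := by
  refine isNat_of_eqE subst hβ ((eqE_of_isSuccOf_of_isSuccOf hA hW ?_).trans hWβ)
  rintro ⟨hAW, hWA⟩
  exact hβ (hβt A ((hWβ A).1 hAW) β (subst β W A hWβ.symm hWA))

/-- If the first number is an individual, every element of a would-be natural number is an
individual, by `∈`-induction; the number would then equal its first number. -/
theorem not_isNat_of_mem_self (subst : SubstAxiom mem) (indiv : IndividualAxiom mem)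
    (regularity : RegularityAxiom mem) (separation : SeparationAxiom mem) {α N : Obj}
    (hα : mem α α) : ¬ isNat mem α N := by
  rintro ⟨hNα, hN⟩
  have hmemα : ∀ {x}, mem x α ↔ eqE mem x α := mem_iff_eqE_of_mem_self subst indiv hα
  rcases hN N (Or.inr (eqE.refl N)) with (h | h) | ⟨hαN, U, hU, hS⟩
  · exact hNα h
  · exact hNα (hmemα.2 h)
  have hindiv : ∀ x, mem x N → mem x x := by
    intro x hx
    by_contra hxx
    refine regularity.induction separation (Φ := fun _ => False) ?_ x hx hxx
    intro y hy hyy ih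
    rcases hN y (Or.inl hy) with (h | h) | ⟨-, V, -, hyV⟩
    · exact hyy (mem_self_of_eqE subst (hmemα.1 h) hα)
    · exact hyy (mem_self_of_eqE subst h hα)
    · by_cases hVV : mem V V
      · exact hyy (hyV.mem_self_of_mem_self subst indiv hVV)
      · exact ih V (hS.isTransitive hU y hy V hyV.self_mem) hVV hyV.self_mem
  have hNα' : eqE mem N α := by
    refine fun u => ⟨fun hu => ?_, fun hu => subst u α N (hmemα.1 hu) hαN⟩
    rcases hN u (Or.inl hu) with (h | h) | ⟨hαu, -⟩
    · exact h
    · exact hmemα.2 h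
    · exact hmemα.2 (indiv u α hαu (hindiv u hu)).symm
  exact hNα (hmemα.2 hNα')

theorem isNat.eqE_or_exists_isSuccOf (subst : SubstAxiom mem) (indiv : IndividualAxiom mem)
    {α m : Obj} (hα : ¬ mem α α) (hαindiv : ∀ u, mem u α → mem u u)
    (hm : isNat mem α m) :
    eqE mem m α ∨ ∃ U, isNat mem α U ∧ isSuccOf mem m U := by
  rcases hm.2 m (Or.inr (eqE.refl m)) with (h | h) | ⟨hαm, U, -, hS⟩
  · exact absurd h hm.1
  · exact Or.inl h
  have hUα : ¬ mem U α := by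
    intro hUα
    rcases (hS α).1 hαm with hαU | hαU
    · exact hα (mem_self_of_mem_of_mem_self subst indiv hαU (hαindiv U hUα))
    · exact hα (subst α U α hαU hUα)
  exact Or.inr ⟨U, hm.of_mem subst (isTransitive_of_forall_mem_self subst indiv hαindiv)
    hS.self_mem hUα, hS⟩

theorem isTransitive_of_forall_mem_iff_isNat (subst : SubstAxiom mem) {α ω : Obj}
    (hα : IsTransitive mem α) (hω : ∀ n, mem n ω ↔ (mem n α ∨ isNat mem α n)) :
    IsTransitive mem ω := by
  intro z hz u hu
  by_cases huα : mem u α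
  · exact (hω u).2 (Or.inl huα)
  rcases (hω z).1 hz with hzα | hzNat
  · exact absurd (hα z hzα u hu) huα
  · exact (hω u).2 (Or.inr (hzNat.of_mem subst hα hu huα))

theorem not_mem_self_of_forall_mem_iff_isNat (subst : SubstAxiom mem) (indiv : IndividualAxiom mem)
    {α ω : Obj} (hα : ¬ mem α α) (hαindiv : ∀ u, mem u α → mem u u)
    (hω : ∀ n, mem n ω ↔ (mem n α ∨ isNat mem α n)) : ¬ mem ω ω := by
  intro hωω
  rcases (hω ω).1 hωω with hωα | hωNat
  · have hαω : mem α ω := (hω α).2 (Or.inr (isNat_self subst hα))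
    exact hα (mem_self_of_mem_of_mem_self subst indiv hαω (hαindiv ω hωα))
  · exact hωNat.not_mem_self subst indiv hα hωω

end

theorem omega_add_nat_isOrd_general {Obj : Type} (mem : Obj → Obj → Prop)
    (subst : ∀ s t v, eqE mem s t → mem t v → mem s v)
    (indiv : ∀ p s, mem s p → mem p p → eqE mem s p)
    (pairing : ∀ s t, ∃ v, ∀ u, mem u v ↔ (eqE mem u s ∨ eqE mem u t))
    (union : ∀ s, ∃ v, isUnionOf mem v s)
    (regularity : ∀ s, (∃ v, mem v s ∧ ¬ mem v v) →
      ∃ v, mem v s ∧ ¬ mem v v ∧ ∀ u, mem u s → ¬ mem u u → ¬ mem u v)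
    (spec : ∀ (Φ : Obj → Prop) (s : Obj), (∃ u, mem u s ∧ Φ u) →
      ∃ v, ∀ u, mem u v ↔ (mem u s ∧ Φ u))
    (p q α : Obj) (hp : mem p p) (hq : mem q q)
    (hα : ∀ u, mem u α ↔ (eqE mem u p ∨ eqE mem u q))
    (ω : Obj) (hω : ∀ n, mem n ω ↔ (mem n α ∨ isNat mem α n))
    (addW : Obj → Obj)
    (haddW0 : ∀ u, mem u (addW α) ↔ (mem u ω ∨ mem u α))
    (haddWS : ∀ n n', isSuccOf mem n' n → isSuccOf mem (addW n') (addW n))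
    (n : Obj) (hn : isNat mem α n) :
    isNat mem ω (addW n) := by
  by_cases hαα : mem α α
  · exact absurd hn (not_isNat_of_mem_self subst indiv regularity spec hαα)
  have hαindiv : ∀ u, mem u α → mem u u := fun u hu =>
    ((hα u).1 hu).elim (fun h => mem_self_of_eqE subst h hp) (fun h => mem_self_of_eqE subst h hq)
  have hαt : IsTransitive mem α := isTransitive_of_forall_mem_self subst indiv hαindiv
  have hωt : IsTransitive mem ω := isTransitive_of_forall_mem_iff_isNat subst hαt hω
  have hωω : ¬ mem ω ω := not_mem_self_of_forall_mem_iff_isNat subst indiv hαα hαindiv hω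
  refine RegularityAxiom.induction regularity spec
    (Φ := fun X => isNat mem α X → isNat mem ω (addW X)) ?_
    n ((hω n).2 (Or.inr hn)) (hn.not_mem_self subst indiv hαα) hn
  intro m hmω _ ih hm
  rcases hm.eqE_or_exists_isSuccOf subst indiv hαα hαindiv with hmα | ⟨U, hU, hS⟩
  · -- `addW` need not respect `eqE`, but `addW m` and `addW α` have a common successor.
    obtain ⟨S, hmS⟩ := exists_isSuccOf pairing union m
    have h0 : eqE mem (addW α) ω := fun u =>
      (haddW0 u).trans ⟨fun h => h.elim id fun hu => (hω u).2 (Or.inl hu), Or.inl⟩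
    exact isNat_of_isSuccOf_of_isSuccOf subst hωt hωω h0 (haddWS m S hmS)
      (haddWS α S (hmS.congr_right hmα))
  · have hUω : mem U ω := hωt m hmω U hS.self_mem
    have ihU := ih U hUω (hU.not_mem_self subst indiv hαα) hS.self_mem hU
    exact ihU.succ hωt hωω (haddWS U m hS)

/-- For every natural number n, ω + n is an ordinal number with first
number ω. -/
theorem omega_add_nat_isOrd {Obj : Type} (mem : Obj → Obj → Prop)
    (subst : ∀ s t v, eqE mem s t → mem t v → mem s v)
    (indiv : ∀ p s, mem s p → mem p p → eqE mem s p)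
    (pairing : ∀ s t, ∃ v, ∀ u, mem u v ↔ (eqE mem u s ∨ eqE mem u t))
    (union : ∀ s, ∃ v, isUnionOf mem v s)
    (regularity : ∀ s, (∃ v, mem v s ∧ ¬ mem v v) →
      ∃ v, mem v s ∧ ¬ mem v v ∧ ∀ u, mem u s → ¬ mem u u → ¬ mem u v)
    (spec : ∀ (Φ : Obj → Prop) (s : Obj), (∃ u, mem u s ∧ Φ u) →
      ∃ v, ∀ u, mem u v ↔ (mem u s ∧ Φ u))
    (nonemptyAx : ∀ t : Obj, ∃ u, mem u t)
    (p q α : Obj) (hp : mem p p) (hq : mem q q)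
    (hα : ∀ u, mem u α ↔ (eqE mem u p ∨ eqE mem u q))
    (ω : Obj) (hω : ∀ n, mem n ω ↔ (mem n α ∨ isNat mem α n))
    (addW : Obj → Obj)
    (haddW0 : ∀ u, mem u (addW α) ↔ (mem u ω ∨ mem u α))
    (haddWS : ∀ n n', isSuccOf mem n' n → isSuccOf mem (addW n') (addW n))
    (n : Obj) (hn : isNat mem α n) :
    isNat mem ω (addW n) :=
  omega_add_nat_isOrd_general mem subst indiv pairing union regularity spec p q α hp hq hα ω hω addW
    haddW0 haddWS n hn
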